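/- Suppose the step-size satisfies η < 1/‖A‖₂. For any z ∈ ℝⁿ × ℝᵐ, let z̃ = PDHG(z). Then for any R ≥ ‖z̃‖₂ and any r ∈ (0, R]: (1/√(1+R²))·KKT(z̃) ≤ ρ_r(z̃) ≤ √(σ_max(P))·‖z − z̃‖_P ≤ 2·σ_max(P)·dist₂(z, Z*), where σ_max(P) is the largest eigenvalue of P. -/

import Mathlib

open Matrix
open scoped BigOperators

noncomputable section

/-- Euclidean norm of a vector in `ℝᵏ`. -/
def nrm {k : ℕ} (v : Fin k → ℝ) : ℝ := Real.sqrt (v ⬝ᵥ v)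

/-- Euclidean norm of a primal-dual pair `z = (x, y) ∈ ℝⁿ × ℝᵐ`. -/
def nrmP {n m : ℕ} (z : (Fin n → ℝ) × (Fin m → ℝ)) : ℝ :=
  Real.sqrt (z.1 ⬝ᵥ z.1 + z.2 ⬝ᵥ z.2)

/-- Spectral norm `‖A‖₂` of a matrix: the supremum of `‖Ax‖₂` over unit vectors `x`. -/
def specNorm {n m : ℕ} (A : Matrix (Fin m) (Fin n) ℝ) : ℝ :=
  sSup {r | ∃ x : Fin n → ℝ, nrm x = 1 ∧ r = nrm (A *ᵥ x)}

/-- Componentwise positive part `[v]⁺`. -/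
def posPt {k : ℕ} (v : Fin k → ℝ) : Fin k → ℝ := fun i => max (v i) 0

/-- The Lagrangian `L(x,y) = cᵀx − yᵀAx + bᵀy` of the standard-form LP. -/
def Lag {n m : ℕ} (A : Matrix (Fin m) (Fin n) ℝ) (b : Fin m → ℝ) (c : Fin n → ℝ)
    (x : Fin n → ℝ) (y : Fin m → ℝ) : ℝ :=
  c ⬝ᵥ x - y ⬝ᵥ (A *ᵥ x) + b ⬝ᵥ y

/-- One PDHG iteration with (equal) step-size `η`:
`x⁺ = proj_{ℝ₊ⁿ}(x + ηAᵀy − ηc)`, `y⁺ = y − ηA(2x⁺ − x) + ηb`. -/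
def pdhgStep {n m : ℕ} (A : Matrix (Fin m) (Fin n) ℝ) (b : Fin m → ℝ) (c : Fin n → ℝ)
    (η : ℝ) (z : (Fin n → ℝ) × (Fin m → ℝ)) : (Fin n → ℝ) × (Fin m → ℝ) :=
  let x' := posPt (z.1 + η • (Aᵀ *ᵥ z.2) - η • c)
  (x', z.2 - η • (A *ᵥ ((2 : ℝ) • x' - z.1)) + η • b)

/-- Quadratic form `wᵀPw` of `P = [[(1/η)Iₙ, Aᵀ], [A, (1/η)Iₘ]]`. -/
def Pquad {n m : ℕ} (A : Matrix (Fin m) (Fin n) ℝ) (η : ℝ)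
    (w : (Fin n → ℝ) × (Fin m → ℝ)) : ℝ :=
  (1 / η) * (w.1 ⬝ᵥ w.1) + 2 * (w.2 ⬝ᵥ (A *ᵥ w.1)) + (1 / η) * (w.2 ⬝ᵥ w.2)

/-- The seminorm `‖w‖_P = √(wᵀPw)`. -/
def Pnorm {n m : ℕ} (A : Matrix (Fin m) (Fin n) ℝ) (η : ℝ)
    (w : (Fin n → ℝ) × (Fin m → ℝ)) : ℝ := Real.sqrt (Pquad A η w)

/-- `σ_max(P)`: the largest eigenvalue of the symmetric matrix `P`, i.e. the
supremum of the Rayleigh quotient `wᵀPw` over unit vectors `w`. -/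
def sigmaMaxP {n m : ℕ} (A : Matrix (Fin m) (Fin n) ℝ) (η : ℝ) : ℝ :=
  sSup {r | ∃ w : (Fin n → ℝ) × (Fin m → ℝ), nrmP w = 1 ∧ r = Pquad A η w}

/-- Application of the matrix `P`: `Pw = ((1/η)w₁ + Aᵀw₂, Aw₁ + (1/η)w₂)`. -/
def Papply {n m : ℕ} (A : Matrix (Fin m) (Fin n) ℝ) (η : ℝ)
    (w : (Fin n → ℝ) × (Fin m → ℝ)) : (Fin n → ℝ) × (Fin m → ℝ) :=
  ((1 / η) • w.1 + Aᵀ *ᵥ w.2, A *ᵥ w.1 + (1 / η) • w.2)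

/-- The set `Z*` of saddle points of `L` over `Z = ℝ₊ⁿ × ℝᵐ`:
`L(x*, y) ≤ L(x*, y*) ≤ L(x, y*)` for all `(x, y) ∈ Z`. -/
def saddleSet {n m : ℕ} (A : Matrix (Fin m) (Fin n) ℝ) (b : Fin m → ℝ) (c : Fin n → ℝ) :
    Set ((Fin n → ℝ) × (Fin m → ℝ)) :=
  {z | (∀ i, 0 ≤ z.1 i) ∧
    (∀ y : Fin m → ℝ, Lag A b c z.1 y ≤ Lag A b c z.1 z.2) ∧
    (∀ x : Fin n → ℝ, (∀ i, 0 ≤ x i) → Lag A b c z.1 z.2 ≤ Lag A b c x z.2)}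

/-- Euclidean distance `dist₂(z, S)` from `z` to a set `S`. -/
def dist2 {n m : ℕ} (z : (Fin n → ℝ) × (Fin m → ℝ))
    (S : Set ((Fin n → ℝ) × (Fin m → ℝ))) : ℝ :=
  sInf ((fun w => nrmP (z - w)) '' S)

/-- `P`-seminorm distance `dist_P(z, S)` from `z` to a set `S`. -/
def distP {n m : ℕ} (A : Matrix (Fin m) (Fin n) ℝ) (η : ℝ)
    (z : (Fin n → ℝ) × (Fin m → ℝ)) (S : Set ((Fin n → ℝ) × (Fin m → ℝ))) : ℝ :=
  sInf ((fun w => Pnorm A η (z - w)) '' S)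

/-- KKT error `KKT(z) = ‖(Ax − b, [Aᵀy − c]⁺, [cᵀx − bᵀy]⁺)‖₂`. -/
def KKTerr {n m : ℕ} (A : Matrix (Fin m) (Fin n) ℝ) (b : Fin m → ℝ) (c : Fin n → ℝ)
    (z : (Fin n → ℝ) × (Fin m → ℝ)) : ℝ :=
  Real.sqrt ((A *ᵥ z.1 - b) ⬝ᵥ (A *ᵥ z.1 - b)
    + posPt (Aᵀ *ᵥ z.2 - c) ⬝ᵥ posPt (Aᵀ *ᵥ z.2 - c)
    + (max (c ⬝ᵥ z.1 - b ⬝ᵥ z.2) 0) ^ 2)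

/-- Normalized duality gap `ρ_r(z) = sup_{ẑ ∈ W_r(z)} (L(x, ŷ) − L(x̂, y)) / r`,
where `W_r(z) = {ẑ ∈ Z : ‖z − ẑ‖₂ ≤ r}`. -/
def rhoGap {n m : ℕ} (A : Matrix (Fin m) (Fin n) ℝ) (b : Fin m → ℝ) (c : Fin n → ℝ)
    (r : ℝ) (z : (Fin n → ℝ) × (Fin m → ℝ)) : ℝ :=
  sSup {g | ∃ w : (Fin n → ℝ) × (Fin m → ℝ), (∀ i, 0 ≤ w.1 i) ∧ nrmP (z - w) ≤ r ∧
    g = (Lag A b c z.1 w.2 - Lag A b c w.1 z.2) / r}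

/-- The subdifferential operator
`F(z) = {(c − Aᵀy + g, Ax − b) : g ∈ N_{ℝ₊ⁿ}(x)}`, where `N_{ℝ₊ⁿ}(x)` is the
normal cone of `ℝ₊ⁿ` at `x ∈ ℝ₊ⁿ` (the set is empty if `x ∉ ℝ₊ⁿ`). -/
def Fop {n m : ℕ} (A : Matrix (Fin m) (Fin n) ℝ) (b : Fin m → ℝ) (c : Fin n → ℝ)
    (z : (Fin n → ℝ) × (Fin m → ℝ)) : Set ((Fin n → ℝ) × (Fin m → ℝ)) :=
  {w | (∀ i, 0 ≤ z.1 i) ∧ ∃ g : Fin n → ℝ,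
    (∀ u : Fin n → ℝ, (∀ i, 0 ≤ u i) → g ⬝ᵥ (u - z.1) ≤ 0) ∧
    w = (c - Aᵀ *ᵥ z.2 + g, A *ᵥ z.1 - b)}

/-- `dist₂(0, F(z)) = inf {‖w‖₂ : w ∈ F(z)}`. -/
def distF {n m : ℕ} (A : Matrix (Fin m) (Fin n) ℝ) (b : Fin m → ℝ) (c : Fin n → ℝ)
    (z : (Fin n → ℝ) × (Fin m → ℝ)) : ℝ :=
  sInf (nrmP '' Fop A b c z)

end



section Aux
open Matrix
noncomputable section
lemma dot_self_nonneg {k : ℕ} (v : Fin k → ℝ) : 0 ≤ v ⬝ᵥ v :=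
  Finset.sum_nonneg fun i _ => mul_self_nonneg (v i)

lemma dot_self_eq_zero {k : ℕ} {v : Fin k → ℝ} (h : v ⬝ᵥ v = 0) : v = 0 := by
  funext i
  have h2 := (Finset.sum_eq_zero_iff_of_nonneg (fun j _ => mul_self_nonneg (v j))).1 h i (Finset.mem_univ i)
  have := mul_self_eq_zero.1 h2
  simpa using this

lemma sq_le_imp {a b c : ℝ} (hb : 0 ≤ b) (h : a^2 ≤ b*c) : a ≤ Real.sqrt b * Real.sqrt c := by
  calc a ≤ |a| := le_abs_self a
  _ = Real.sqrt (a^2) := (Real.sqrt_sq_eq_abs a).symm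
  _ ≤ Real.sqrt (b*c) := Real.sqrt_le_sqrt h
  _ = Real.sqrt b * Real.sqrt c := Real.sqrt_mul hb c

/-- Cauchy–Schwarz for a PSD symmetric bilinear form. -/
lemma bilin_cs_sq {V : Type*} [AddCommGroup V] [Module ℝ V] (B : V → V → ℝ)
    (hadd : ∀ u v w, B (u+v) w = B u w + B v w)
    (hsmul : ∀ (t:ℝ) u w, B (t•u) w = t * B u w)
    (hsymm : ∀ u v, B u v = B v u)
    (hpos : ∀ w, 0 ≤ B w w) (u v : V) :
    (B u v)^2 ≤ B u u * B v v := by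
  have key : ∀ t : ℝ, 0 ≤ (B u u) * (t*t) + (2 * B u v) * t + B v v := by
    intro t
    have h0 := hpos (t•u + v)
    have haddr : ∀ a b w : V, B w (a+b) = B w a + B w b := fun a b w => by
      rw [hsymm, hadd, hsymm a w, hsymm b w]
    have hsmulr : ∀ (s:ℝ) (a w : V), B w (s•a) = s * B w a := fun s a w => by
      rw [hsymm, hsmul, hsymm a w]
    have e1 : B (t•u+v) (t•u+v) = t*(t*(B u u)) + t*(B u v) + (t * B u v + B v v) := by
      rw [hadd, hsmul, haddr, haddr, hsmulr, hsmulr, hsymm v u]; ring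
    rw [e1] at h0; nlinarith [h0]
  have hd := discrim_le_zero key
  rw [discrim] at hd
  nlinarith

lemma bilin_cs {V : Type*} [AddCommGroup V] [Module ℝ V] (B : V → V → ℝ)
    (hadd : ∀ u v w, B (u+v) w = B u w + B v w)
    (hsmul : ∀ (t:ℝ) u w, B (t•u) w = t * B u w)
    (hsymm : ∀ u v, B u v = B v u)
    (hpos : ∀ w, 0 ≤ B w w) (u v : V) :
    B u v ≤ Real.sqrt (B u u) * Real.sqrt (B v v) :=
  sq_le_imp (hpos u) (bilin_cs_sq B hadd hsmul hsymm hpos u v)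

lemma bilin_sq_expand {V : Type*} [AddCommGroup V] [Module ℝ V] (B : V → V → ℝ)
    (hadd : ∀ u v w, B (u+v) w = B u w + B v w)
    (hsymm : ∀ u v, B u v = B v u) (u v : V) :
    B (u+v) (u+v) = B u u + 2 * B u v + B v v := by
  have haddr : ∀ a b w : V, B w (a+b) = B w a + B w b := fun a b w => by
    rw [hsymm, hadd, hsymm a w, hsymm b w]
  rw [hadd, haddr, haddr, hsymm v u]; ring

lemma bilin_triangle {V : Type*} [AddCommGroup V] [Module ℝ V] (B : V → V → ℝ)
    (hadd : ∀ u v w, B (u+v) w = B u w + B v w)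
    (hsmul : ∀ (t:ℝ) u w, B (t•u) w = t * B u w)
    (hsymm : ∀ u v, B u v = B v u)
    (hpos : ∀ w, 0 ≤ B w w) (u v : V) :
    Real.sqrt (B (u+v) (u+v)) ≤ Real.sqrt (B u u) + Real.sqrt (B v v) := by
  have hcs := bilin_cs B hadd hsmul hsymm hpos u v
  have h1 : B (u+v) (u+v) ≤ (Real.sqrt (B u u) + Real.sqrt (B v v))^2 := by
    rw [bilin_sq_expand B hadd hsymm]
    have e1 : Real.sqrt (B u u)^2 = B u u := Real.sq_sqrt (hpos u)
    have e2 : Real.sqrt (B v v)^2 = B v v := Real.sq_sqrt (hpos v)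
    nlinarith
  calc Real.sqrt (B (u+v) (u+v)) ≤ Real.sqrt ((Real.sqrt (B u u) + Real.sqrt (B v v))^2) :=
        Real.sqrt_le_sqrt h1
  _ = _ := Real.sqrt_sq (by positivity)

lemma dot_hadd {k : ℕ} (u v w : Fin k → ℝ) : (u+v) ⬝ᵥ w = u ⬝ᵥ w + v ⬝ᵥ w := add_dotProduct u v w
lemma dot_hsmul {k : ℕ} (t : ℝ) (u w : Fin k → ℝ) : (t•u) ⬝ᵥ w = t * (u ⬝ᵥ w) := smul_dotProduct t u w
lemma dot_hsymm {k : ℕ} (u v : Fin k → ℝ) : u ⬝ᵥ v = v ⬝ᵥ u := dotProduct_comm u v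

lemma dot_cs_sq {k : ℕ} (u v : Fin k → ℝ) : (u ⬝ᵥ v)^2 ≤ (u ⬝ᵥ u) * (v ⬝ᵥ v) :=
  bilin_cs_sq (fun a b => a ⬝ᵥ b) dot_hadd dot_hsmul dot_hsymm dot_self_nonneg u v

lemma dot_cs {k : ℕ} (u v : Fin k → ℝ) : u ⬝ᵥ v ≤ nrm u * nrm v :=
  bilin_cs (fun a b => a ⬝ᵥ b) dot_hadd dot_hsmul dot_hsymm dot_self_nonneg u v

lemma nrm_nonneg {k : ℕ} (v : Fin k → ℝ) : 0 ≤ nrm v := Real.sqrt_nonneg _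
lemma nrm_sq {k : ℕ} (v : Fin k → ℝ) : (nrm v)^2 = v ⬝ᵥ v := Real.sq_sqrt (dot_self_nonneg v)

lemma nrm_smul {k : ℕ} (t : ℝ) (v : Fin k → ℝ) : nrm (t • v) = |t| * nrm v := by
  unfold nrm
  rw [smul_dotProduct, dotProduct_smul, smul_eq_mul, smul_eq_mul, ← mul_assoc,
    show t*t = t^2 by ring, Real.sqrt_mul (sq_nonneg t), Real.sqrt_sq_eq_abs]

lemma nrm_neg {k : ℕ} (v : Fin k → ℝ) : nrm (-v) = nrm v := by
  have : (-1 : ℝ) • v = -v := by simp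
  rw [← this, nrm_smul]; simp

lemma dot_cs_abs {k : ℕ} (u v : Fin k → ℝ) : -(nrm u * nrm v) ≤ u ⬝ᵥ v := by
  have := dot_cs (-u) v
  rw [nrm_neg] at this
  have e : (-u) ⬝ᵥ v = -(u ⬝ᵥ v) := by rw [neg_dotProduct]
  linarith [this, e ▸ this]

/-- row bound: `‖Av‖ ≤ frob A * ‖v‖`. -/
lemma mulVec_nrm_le {n m : ℕ} (A : Matrix (Fin m) (Fin n) ℝ) (v : Fin n → ℝ) :
    nrm (A *ᵥ v) ≤ Real.sqrt (∑ i, A i ⬝ᵥ A i) * nrm v := by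
  have h1 : (A *ᵥ v) ⬝ᵥ (A *ᵥ v) ≤ (∑ i, A i ⬝ᵥ A i) * (v ⬝ᵥ v) := by
    have : (A *ᵥ v) ⬝ᵥ (A *ᵥ v) = ∑ i, (A i ⬝ᵥ v) * (A i ⬝ᵥ v) := rfl
    rw [this, Finset.sum_mul]
    apply Finset.sum_le_sum
    intro i _
    have := dot_cs_sq (A i) v
    nlinarith [this]
  calc nrm (A *ᵥ v) ≤ Real.sqrt ((∑ i, A i ⬝ᵥ A i) * (v ⬝ᵥ v)) := Real.sqrt_le_sqrt h1
  _ = _ := Real.sqrt_mul (Finset.sum_nonneg fun i _ => dot_self_nonneg (A i)) _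

lemma specNorm_nonneg {n m : ℕ} (A : Matrix (Fin m) (Fin n) ℝ) : 0 ≤ specNorm A :=
  Real.sSup_nonneg fun x hx => by obtain ⟨w, _, rfl⟩ := hx; exact nrm_nonneg _

lemma specNorm_bdd {n m : ℕ} (A : Matrix (Fin m) (Fin n) ℝ) :
    BddAbove {r | ∃ x : Fin n → ℝ, nrm x = 1 ∧ r = nrm (A *ᵥ x)} := by
  refine ⟨Real.sqrt (∑ i, A i ⬝ᵥ A i), fun r hr => ?_⟩
  obtain ⟨x, hx, rfl⟩ := hr
  have := mulVec_nrm_le A x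
  rw [hx, mul_one] at this
  exact this

lemma nrm_eq_zero {k : ℕ} {v : Fin k → ℝ} (h : nrm v = 0) : v = 0 := by
  apply dot_self_eq_zero
  have h1 := dot_self_nonneg v
  have : Real.sqrt (v ⬝ᵥ v) = 0 := h
  nlinarith [Real.sq_sqrt h1, this]

lemma mulVec_le_specNorm {n m : ℕ} (A : Matrix (Fin m) (Fin n) ℝ) (v : Fin n → ℝ) :
    nrm (A *ᵥ v) ≤ specNorm A * nrm v := by
  by_cases hv : nrm v = 0
  · rw [nrm_eq_zero hv, mulVec_zero]
    have h0 : ∀ k, nrm (0 : Fin k → ℝ) = 0 := by intro k; unfold nrm; simp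
    rw [h0, h0, mul_zero]
  · have hvpos : 0 < nrm v := lt_of_le_of_ne (nrm_nonneg v) (Ne.symm hv)
    set s := nrm v
    have hu : nrm (s⁻¹ • v) = 1 := by
      rw [nrm_smul, abs_of_pos (inv_pos.2 hvpos)]
      field_simp
      rfl
    have hmem : nrm (A *ᵥ (s⁻¹ • v)) ∈ {r | ∃ x : Fin n → ℝ, nrm x = 1 ∧ r = nrm (A *ᵥ x)} :=
      ⟨s⁻¹ • v, hu, rfl⟩
    have hle := le_csSup (specNorm_bdd A) hmem
    rw [mulVec_smul, nrm_smul, abs_of_pos (inv_pos.2 hvpos)] at hle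
    calc nrm (A *ᵥ v) = s * (s⁻¹ * nrm (A *ᵥ v)) := by field_simp
    _ ≤ s * specNorm A := by
        apply mul_le_mul_of_nonneg_left hle (le_of_lt hvpos)
    _ = specNorm A * s := mul_comm _ _

lemma dot_mulVec_le {n m : ℕ} (A : Matrix (Fin m) (Fin n) ℝ) (u : Fin m → ℝ) (v : Fin n → ℝ) :
    u ⬝ᵥ (A *ᵥ v) ≤ specNorm A * nrm u * nrm v := by
  calc u ⬝ᵥ (A *ᵥ v) ≤ nrm u * nrm (A *ᵥ v) := dot_cs _ _
  _ ≤ nrm u * (specNorm A * nrm v) :=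
      mul_le_mul_of_nonneg_left (mulVec_le_specNorm A v) (nrm_nonneg u)
  _ = _ := by ring

lemma dot_mulVec_ge {n m : ℕ} (A : Matrix (Fin m) (Fin n) ℝ) (u : Fin m → ℝ) (v : Fin n → ℝ) :
    -(specNorm A * nrm u * nrm v) ≤ u ⬝ᵥ (A *ᵥ v) := by
  have := dot_mulVec_le A (-u) v
  rw [nrm_neg, neg_dotProduct] at this
  linarith

def dotZ {n m : ℕ} (w v : (Fin n → ℝ) × (Fin m → ℝ)) : ℝ := w.1 ⬝ᵥ v.1 + w.2 ⬝ᵥ v.2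

def Pbil {n m : ℕ} (A : Matrix (Fin m) (Fin n) ℝ) (η : ℝ)
    (w v : (Fin n → ℝ) × (Fin m → ℝ)) : ℝ :=
  (1/η) * (w.1 ⬝ᵥ v.1) + w.2 ⬝ᵥ (A *ᵥ v.1) + v.2 ⬝ᵥ (A *ᵥ w.1) + (1/η) * (w.2 ⬝ᵥ v.2)

lemma dotZ_hadd {n m : ℕ} (u v w : (Fin n → ℝ) × (Fin m → ℝ)) :
    dotZ (u+v) w = dotZ u w + dotZ v w := by
  simp [dotZ, add_dotProduct]; ring

lemma dotZ_hsmul {n m : ℕ} (t : ℝ) (u w : (Fin n → ℝ) × (Fin m → ℝ)) :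
    dotZ (t•u) w = t * dotZ u w := by
  simp [dotZ, smul_dotProduct]; ring

lemma dotZ_hsymm {n m : ℕ} (u v : (Fin n → ℝ) × (Fin m → ℝ)) : dotZ u v = dotZ v u := by
  simp [dotZ, dotProduct_comm]

lemma dotZ_pos {n m : ℕ} (w : (Fin n → ℝ) × (Fin m → ℝ)) : 0 ≤ dotZ w w :=
  add_nonneg (dot_self_nonneg _) (dot_self_nonneg _)

lemma nrmP_eq {n m : ℕ} (v : (Fin n → ℝ) × (Fin m → ℝ)) : nrmP v = Real.sqrt (dotZ v v) := rfl

lemma nrmP_nonneg {n m : ℕ} (v : (Fin n → ℝ) × (Fin m → ℝ)) : 0 ≤ nrmP v := Real.sqrt_nonneg _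

lemma nrmP_sq {n m : ℕ} (v : (Fin n → ℝ) × (Fin m → ℝ)) : (nrmP v)^2 = dotZ v v :=
  Real.sq_sqrt (dotZ_pos v)

lemma nrmP_smul {n m : ℕ} (t : ℝ) (v : (Fin n → ℝ) × (Fin m → ℝ)) :
    nrmP (t • v) = |t| * nrmP v := by
  rw [nrmP_eq, nrmP_eq, dotZ_hsmul]
  have : dotZ v (t • v) = t * dotZ v v := by rw [dotZ_hsymm, dotZ_hsmul]
  rw [this, ← mul_assoc, show t*t = t^2 by ring, Real.sqrt_mul (sq_nonneg t), Real.sqrt_sq_eq_abs]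

lemma nrmP_neg {n m : ℕ} (v : (Fin n → ℝ) × (Fin m → ℝ)) : nrmP (-v) = nrmP v := by
  have : (-1 : ℝ) • v = -v := by simp
  rw [← this, nrmP_smul]; simp

lemma nrmP_triangle {n m : ℕ} (u v : (Fin n → ℝ) × (Fin m → ℝ)) :
    nrmP (u + v) ≤ nrmP u + nrmP v := by
  rw [nrmP_eq, nrmP_eq, nrmP_eq]
  exact bilin_triangle dotZ dotZ_hadd dotZ_hsmul dotZ_hsymm dotZ_pos u v

lemma nrmP_eq_zero {n m : ℕ} {v : (Fin n → ℝ) × (Fin m → ℝ)} (h : nrmP v = 0) : v = 0 := by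
  have h1 : dotZ v v = 0 := by
    have := nrmP_sq v
    rw [h] at this; simpa using this.symm
  have h2 : v.1 ⬝ᵥ v.1 = 0 ∧ v.2 ⬝ᵥ v.2 = 0 := by
    constructor <;> nlinarith [dot_self_nonneg v.1, dot_self_nonneg v.2,
      show v.1 ⬝ᵥ v.1 + v.2 ⬝ᵥ v.2 = 0 from h1]
  have := dot_self_eq_zero h2.1
  have := dot_self_eq_zero h2.2
  exact Prod.ext (dot_self_eq_zero h2.1) (dot_self_eq_zero h2.2)

lemma Pbil_hadd {n m : ℕ} (A : Matrix (Fin m) (Fin n) ℝ) (η : ℝ)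
    (u v w : (Fin n → ℝ) × (Fin m → ℝ)) :
    Pbil A η (u+v) w = Pbil A η u w + Pbil A η v w := by
  simp [Pbil, add_dotProduct, dotProduct_add, mulVec_add]; ring

lemma Pbil_hsmul {n m : ℕ} (A : Matrix (Fin m) (Fin n) ℝ) (η : ℝ) (t : ℝ)
    (u w : (Fin n → ℝ) × (Fin m → ℝ)) :
    Pbil A η (t•u) w = t * Pbil A η u w := by
  simp [Pbil, smul_dotProduct, dotProduct_smul, mulVec_smul]; ring

lemma Pbil_hsymm {n m : ℕ} (A : Matrix (Fin m) (Fin n) ℝ) (η : ℝ)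
    (u v : (Fin n → ℝ) × (Fin m → ℝ)) : Pbil A η u v = Pbil A η v u := by
  simp [Pbil, dotProduct_comm]; ring

lemma Pquad_eq_Pbil {n m : ℕ} (A : Matrix (Fin m) (Fin n) ℝ) (η : ℝ)
    (w : (Fin n → ℝ) × (Fin m → ℝ)) : Pquad A η w = Pbil A η w w := by
  simp [Pquad, Pbil]; ring

lemma Pbil_pos {n m : ℕ} (A : Matrix (Fin m) (Fin n) ℝ) {η : ℝ} (hη0 : 0 < η)
    (hs : specNorm A < 1/η) (w : (Fin n → ℝ) × (Fin m → ℝ)) : 0 ≤ Pbil A η w w := by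
  have hge := dot_mulVec_ge A w.2 w.1
  have h1 := nrm_sq w.1
  have h2 := nrm_sq w.2
  have ha := nrm_nonneg w.1
  have hb := nrm_nonneg w.2
  have hs0 := specNorm_nonneg A
  unfold Pbil
  nlinarith [sq_nonneg (nrm w.1 - nrm w.2), mul_nonneg ha hb,
    mul_le_mul_of_nonneg_right (le_of_lt hs) (mul_nonneg ha hb)]

lemma sigma_bdd {n m : ℕ} (A : Matrix (Fin m) (Fin n) ℝ) (η : ℝ) :
    BddAbove {r | ∃ w : (Fin n → ℝ) × (Fin m → ℝ), nrmP w = 1 ∧ r = Pquad A η w} := by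
  refine ⟨|1/η| + specNorm A, fun r hr => ?_⟩
  obtain ⟨w, hw, rfl⟩ := hr
  have h1 := nrm_sq w.1
  have h2 := nrm_sq w.2
  have ha := nrm_nonneg w.1
  have hb := nrm_nonneg w.2
  have hs0 := specNorm_nonneg A
  have hle := dot_mulVec_le A w.2 w.1
  have hunit : nrm w.1 ^2 + nrm w.2 ^2 = 1 := by
    have := nrmP_sq w
    rw [hw] at this
    simp [dotZ] at this
    rw [h1, h2]; linarith
  have habs : (1/η) * (w.1 ⬝ᵥ w.1) + (1/η) * (w.2 ⬝ᵥ w.2) ≤ |1/η| := by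
    rw [← h1, ← h2]
    have : (1/η) * (nrm w.1^2) + (1/η) * (nrm w.2^2) = (1/η) * (nrm w.1^2 + nrm w.2^2) := by ring
    rw [this, hunit, mul_one]
    exact le_abs_self _
  unfold Pquad
  nlinarith [sq_nonneg (nrm w.1 - nrm w.2), mul_nonneg ha hb,
    mul_le_mul_of_nonneg_left (show 2*(nrm w.1 * nrm w.2) ≤ 1 by nlinarith [sq_nonneg (nrm w.1 - nrm w.2)]) hs0]

lemma sigma_nonneg {n m : ℕ} (A : Matrix (Fin m) (Fin n) ℝ) {η : ℝ} (hη0 : 0 < η)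
    (hs : specNorm A < 1/η) : 0 ≤ sigmaMaxP A η :=
  Real.sSup_nonneg fun r hr => by
    obtain ⟨w, _, rfl⟩ := hr
    rw [Pquad_eq_Pbil]; exact Pbil_pos A hη0 hs w

lemma rayleigh {n m : ℕ} (A : Matrix (Fin m) (Fin n) ℝ) (η : ℝ)
    (v : (Fin n → ℝ) × (Fin m → ℝ)) :
    Pquad A η v ≤ sigmaMaxP A η * (nrmP v)^2 := by
  by_cases hv : nrmP v = 0
  · rw [nrmP_eq_zero hv]
    have h0 : Pquad A η (0 : (Fin n → ℝ) × (Fin m → ℝ)) = 0 := by simp [Pquad]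
    have h0' : nrmP (0 : (Fin n → ℝ) × (Fin m → ℝ)) = 0 := by
      unfold nrmP; simp
    rw [h0, h0']; simp
  · have hvpos : 0 < nrmP v := lt_of_le_of_ne (nrmP_nonneg v) (Ne.symm hv)
    set s := nrmP v with hsdef
    have hu : nrmP (s⁻¹ • v) = 1 := by
      rw [nrmP_smul, abs_of_pos (inv_pos.2 hvpos)]; field_simp; rfl
    have hle := le_csSup (sigma_bdd A η) ⟨s⁻¹ • v, hu, rfl⟩
    have hhom : Pquad A η (s⁻¹ • v) = s⁻¹ * (s⁻¹ * Pquad A η v) := by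
      rw [Pquad_eq_Pbil, Pbil_hsmul]
      have : Pbil A η v (s⁻¹ • v) = s⁻¹ * Pbil A η v v := by
        rw [Pbil_hsymm, Pbil_hsmul]
      rw [this, ← Pquad_eq_Pbil]
    rw [hhom] at hle
    calc Pquad A η v = s^2 * (s⁻¹ * (s⁻¹ * Pquad A η v)) := by field_simp
    _ ≤ s^2 * sigmaMaxP A η := mul_le_mul_of_nonneg_left hle (sq_nonneg s)
    _ = sigmaMaxP A η * s^2 := mul_comm _ _

lemma Pnorm_le_sigma {n m : ℕ} (A : Matrix (Fin m) (Fin n) ℝ) {η : ℝ} (hη0 : 0 < η)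
    (hs : specNorm A < 1/η) (v : (Fin n → ℝ) × (Fin m → ℝ)) :
    Real.sqrt (Pquad A η v) ≤ Real.sqrt (sigmaMaxP A η) * nrmP v := by
  calc Real.sqrt (Pquad A η v) ≤ Real.sqrt (sigmaMaxP A η * (nrmP v)^2) :=
        Real.sqrt_le_sqrt (rayleigh A η v)
  _ = Real.sqrt (sigmaMaxP A η) * Real.sqrt ((nrmP v)^2) :=
        Real.sqrt_mul (sigma_nonneg A hη0 hs) _
  _ = _ := by rw [Real.sqrt_sq (nrmP_nonneg v)]


lemma key_identity {n m : ℕ} (A : Matrix (Fin m) (Fin n) ℝ) (b : Fin m → ℝ) (c : Fin n → ℝ)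
    {η : ℝ} (hη : η ≠ 0) (x xh xt : Fin n → ℝ) (y yh : Fin m → ℝ) :
    Lag A b c xt yh - Lag A b c xh (y - η • (A *ᵥ ((2:ℝ) • xt - x)) + η • b) =
      Pbil A η (x - xt, y - (y - η • (A *ᵥ ((2:ℝ) • xt - x)) + η • b))
        (xt - xh, (y - η • (A *ᵥ ((2:ℝ) • xt - x)) + η • b) - yh)
      + (1/η) * (((x + η • (Aᵀ *ᵥ y) - η • c) - xt) ⬝ᵥ (xh - xt)) := by
  simp only [Lag, Pbil, add_dotProduct, dotProduct_add, sub_dotProduct, dotProduct_sub,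
    smul_dotProduct, dotProduct_smul, mulVec_add, mulVec_sub, mulVec_smul, smul_eq_mul,
    dotProduct_mulVec, mulVec_transpose, dotProduct_comm]
  field_simp
  ring

lemma key_identity3 {n m : ℕ} (A : Matrix (Fin m) (Fin n) ℝ) (b : Fin m → ℝ) (c : Fin n → ℝ)
    {η : ℝ} (hη : η ≠ 0) (x xt xs : Fin n → ℝ) (y ys : Fin m → ℝ) (hb : A *ᵥ xs = b) :
    Pbil A η (x - xt, y - (y - η • (A *ᵥ ((2:ℝ) • xt - x)) + η • b))
        (xt - xs, (y - η • (A *ᵥ ((2:ℝ) • xt - x)) + η • b) - ys) =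
      (1/η) * (((x + η • (Aᵀ *ᵥ y) - η • c) - xt) ⬝ᵥ (xt - xs))
      + (c - Aᵀ *ᵥ ys) ⬝ᵥ (xt - xs) := by
  subst hb
  simp only [Pbil, add_dotProduct, dotProduct_add, sub_dotProduct, dotProduct_sub,
    smul_dotProduct, dotProduct_smul, mulVec_add, mulVec_sub, mulVec_smul, smul_eq_mul,
    dotProduct_mulVec, mulVec_transpose, dotProduct_comm]
  field_simp
  ring

lemma posPt_nonneg {k : ℕ} (v : Fin k → ℝ) (i : Fin k) : 0 ≤ posPt v i := le_max_right _ _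

lemma proj_lemma {k : ℕ} (v u : Fin k → ℝ) (hu : ∀ i, 0 ≤ u i) :
    (v - posPt v) ⬝ᵥ (u - posPt v) ≤ 0 := by
  apply Finset.sum_nonpos
  intro i _
  simp only [Pi.sub_apply, posPt]
  rcases le_or_gt 0 (v i) with h | h
  · rw [max_eq_left h]; simp
  · rw [max_eq_right (le_of_lt h)]
    simp only [sub_zero]
    exact mul_nonpos_of_nonpos_of_nonneg (le_of_lt h) (hu i)

lemma posPt_dot {k : ℕ} (v : Fin k → ℝ) : posPt v ⬝ᵥ v = posPt v ⬝ᵥ posPt v := by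
  apply Finset.sum_congr rfl
  intro i _
  simp only [posPt]
  rcases le_or_gt 0 (v i) with h | h
  · rw [max_eq_left h]
  · rw [max_eq_right (le_of_lt h), zero_mul, zero_mul]

lemma gap_identity {n m : ℕ} (A : Matrix (Fin m) (Fin n) ℝ) (b : Fin m → ℝ) (c : Fin n → ℝ)
    (xt d : Fin n → ℝ) (yt p : Fin m → ℝ) (t γ : ℝ) :
    Lag A b c xt (yt - t • p - (t*γ) • yt) - Lag A b c (xt + t • d - (t*γ) • xt) yt =
      t * (p ⬝ᵥ (A *ᵥ xt - b)) + t * (d ⬝ᵥ (Aᵀ *ᵥ yt - c)) + t * γ * (c ⬝ᵥ xt - b ⬝ᵥ yt) := by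
  simp only [Lag, add_dotProduct, dotProduct_add, sub_dotProduct, dotProduct_sub,
    smul_dotProduct, dotProduct_smul, mulVec_add, mulVec_sub, mulVec_smul, smul_eq_mul,
    dotProduct_mulVec, mulVec_transpose, dotProduct_comm]
  ring

lemma max_mul_self (a : ℝ) : max a 0 * a = max a 0 ^ 2 := by
  rcases le_or_gt 0 a with h | h
  · rw [max_eq_left h]; ring
  · rw [max_eq_right (le_of_lt h)]; ring

lemma Pbil_neg {n m : ℕ} (A : Matrix (Fin m) (Fin n) ℝ) (η : ℝ)
    (w : (Fin n → ℝ) × (Fin m → ℝ)) : Pbil A η (-w) (-w) = Pbil A η w w := by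
  have h1 : -w = (-1:ℝ) • w := by simp
  rw [h1, Pbil_hsmul, Pbil_hsymm, Pbil_hsmul, Pbil_hsymm]; ring

lemma transpose_dot {n m : ℕ} (A : Matrix (Fin m) (Fin n) ℝ) (y : Fin m → ℝ) (u : Fin n → ℝ) :
    (Aᵀ *ᵥ y) ⬝ᵥ u = y ⬝ᵥ (A *ᵥ u) := by
  rw [mulVec_transpose, dotProduct_mulVec]

lemma saddle_Ax {n m : ℕ} {A : Matrix (Fin m) (Fin n) ℝ} {b : Fin m → ℝ} {c : Fin n → ℝ}
    {zs : (Fin n → ℝ) × (Fin m → ℝ)} (hzs : zs ∈ saddleSet A b c) : A *ᵥ zs.1 = b := by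
  set u := b - A *ᵥ zs.1 with hu
  have h2 := hzs.2.1 (zs.2 + u)
  have hexp : u ⬝ᵥ u ≤ 0 := by
    rw [hu] at h2 ⊢
    simp only [Lag, add_dotProduct, dotProduct_add, sub_dotProduct, dotProduct_sub,
      mulVec_sub, dotProduct_comm] at h2 ⊢
    linarith
  have hu0 : u = 0 := dot_self_eq_zero (le_antisymm hexp (dot_self_nonneg u))
  have : b - A *ᵥ zs.1 = 0 := hu0
  funext i
  have := congrFun this i
  simp only [Pi.sub_apply, Pi.zero_apply] at this
  linarith

lemma saddle_comp {n m : ℕ} {A : Matrix (Fin m) (Fin n) ℝ} {b : Fin m → ℝ} {c : Fin n → ℝ}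
    {zs : (Fin n → ℝ) × (Fin m → ℝ)} (hzs : zs ∈ saddleSet A b c)
    (xt : Fin n → ℝ) (hxt : ∀ i, 0 ≤ xt i) :
    0 ≤ (c - Aᵀ *ᵥ zs.2) ⬝ᵥ (xt - zs.1) := by
  have h3 := hzs.2.2 xt hxt
  simp only [sub_dotProduct, dotProduct_sub, transpose_dot]
  simp only [Lag, add_dotProduct, dotProduct_add, sub_dotProduct, dotProduct_sub,
    mulVec_sub, dotProduct_comm] at h3 ⊢
  linarith

end
end Aux

set_option maxHeartbeats 1000000 in
/-- for `η < 1/‖A‖₂`, `z̃ = PDHG(z)`, any `R ≥ ‖z̃‖₂` and `r ∈ (0, R]`: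
`(1/√(1+R²))·KKT(z̃) ≤ ρ_r(z̃) ≤ √(σ_max(P))·‖z − z̃‖_P ≤ 2σ_max(P)·dist₂(z, Z*)`. -/
theorem stmt1 {n m : ℕ} (A : Matrix (Fin m) (Fin n) ℝ) (b : Fin m → ℝ) (c : Fin n → ℝ)
    (η : ℝ) (hη0 : 0 < η) (hη : η < 1 / specNorm A)
    (hZ : (saddleSet A b c).Nonempty)
    (z zt : (Fin n → ℝ) × (Fin m → ℝ)) (hzt : zt = pdhgStep A b c η z)
    (R r : ℝ) (hR : nrmP zt ≤ R) (hr0 : 0 < r) (hrR : r ≤ R) :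
    (1 / Real.sqrt (1 + R ^ 2)) * KKTerr A b c zt ≤ rhoGap A b c r zt ∧
    rhoGap A b c r zt ≤ Real.sqrt (sigmaMaxP A η) * Pnorm A η (z - zt) ∧
    Real.sqrt (sigmaMaxP A η) * Pnorm A η (z - zt) ≤
      2 * sigmaMaxP A η * dist2 z (saddleSet A b c) := by
  have hη' : η ≠ 0 := ne_of_gt hη0
  have hs : specNorm A < 1 / η := by
    have h0 := specNorm_nonneg A
    rcases eq_or_lt_of_le h0 with h | h
    · rw [← h]; positivity
    · rw [lt_div_iff₀ hη0]; rw [lt_div_iff₀ h] at hη; linarith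
  set v : Fin n → ℝ := z.1 + η • (Aᵀ *ᵥ z.2) - η • c with hv
  have hzt1 : zt.1 = posPt v := by rw [hzt]; rfl
  have hzt2 : zt.2 = z.2 - η • (A *ᵥ ((2:ℝ) • zt.1 - z.1)) + η • b := by
    rw [hzt1, hzt]; rfl
  have hzt1nn : ∀ i, 0 ≤ zt.1 i := by rw [hzt1]; exact posPt_nonneg v
  -- the fundamental gap bound
  have hgap : ∀ w : (Fin n → ℝ) × (Fin m → ℝ), (∀ i, 0 ≤ w.1 i) →
      Lag A b c zt.1 w.2 - Lag A b c w.1 zt.2 ≤ Pbil A η (z - zt) (zt - w) := by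
    intro w hw
    have hid := key_identity A b c hη' z.1 w.1 zt.1 z.2 w.2
    rw [← hzt2] at hid
    have hproj := proj_lemma v w.1 hw
    rw [← hzt1] at hproj
    have hterm : (1/η) * ((v - zt.1) ⬝ᵥ (w.1 - zt.1)) ≤ 0 :=
      mul_nonpos_of_nonneg_of_nonpos (le_of_lt (by positivity)) hproj
    have hpair1 : (z.1 - zt.1, z.2 - zt.2) = z - zt := rfl
    have hpair2 : (zt.1 - w.1, zt.2 - w.2) = zt - w := rfl
    rw [hpair1, hpair2] at hid
    rw [← hv] at hid
    rw [hid]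
    linarith
  -- Cauchy-Schwarz machinery for Pbil
  have hPpos := Pbil_pos A hη0 hs (n := n) (m := m)
  have hPcs := bilin_cs (Pbil A η) (Pbil_hadd A η) (Pbil_hsmul A η) (Pbil_hsymm A η) hPpos
  set σ := sigmaMaxP A η with hσdef
  have hσ0 : 0 ≤ σ := sigma_nonneg A hη0 hs
  set M := Real.sqrt σ * Pnorm A η (z - zt) with hM
  have hM0 : 0 ≤ M := mul_nonneg (Real.sqrt_nonneg _) (Real.sqrt_nonneg _)
  set S := {g | ∃ w : (Fin n → ℝ) × (Fin m → ℝ), (∀ i, 0 ≤ w.1 i) ∧ nrmP (zt - w) ≤ r ∧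
    g = (Lag A b c zt.1 w.2 - Lag A b c w.1 zt.2) / r} with hS
  have hρ : rhoGap A b c r zt = sSup S := rfl
  have hSbound : ∀ g ∈ S, g ≤ M := by
    rintro g ⟨w, hw1, hw2, rfl⟩
    rw [div_le_iff₀ hr0]
    calc Lag A b c zt.1 w.2 - Lag A b c w.1 zt.2 ≤ Pbil A η (z - zt) (zt - w) := hgap w hw1
    _ ≤ Real.sqrt (Pbil A η (z - zt) (z - zt)) * Real.sqrt (Pbil A η (zt - w) (zt - w)) :=
        hPcs _ _
    _ = Real.sqrt (Pquad A η (z - zt)) * Real.sqrt (Pquad A η (zt - w)) := by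
        rw [Pquad_eq_Pbil, Pquad_eq_Pbil]
    _ ≤ Real.sqrt (Pquad A η (z - zt)) * (Real.sqrt σ * nrmP (zt - w)) :=
        mul_le_mul_of_nonneg_left (Pnorm_le_sigma A hη0 hs _) (Real.sqrt_nonneg _)
    _ ≤ Real.sqrt (Pquad A η (z - zt)) * (Real.sqrt σ * r) := by
        apply mul_le_mul_of_nonneg_left _ (Real.sqrt_nonneg _)
        exact mul_le_mul_of_nonneg_left hw2 (Real.sqrt_nonneg _)
    _ = M * r := by rw [hM]; show _ = Real.sqrt σ * Real.sqrt (Pquad A η (z - zt)) * r; ring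
  have hbdd : BddAbove S := ⟨M, hSbound⟩
  have hρ0 : 0 ≤ rhoGap A b c r zt := by
    rw [hρ]
    apply le_csSup hbdd
    refine ⟨zt, hzt1nn, ?_, by rw [sub_self, zero_div]⟩
    have : zt - zt = 0 := sub_self zt
    rw [this]
    have h0 : nrmP (0 : (Fin n → ℝ) × (Fin m → ℝ)) = 0 := by
      unfold nrmP; simp
    rw [h0]; exact le_of_lt hr0
  have ineq2 : rhoGap A b c r zt ≤ Real.sqrt σ * Pnorm A η (z - zt) := by
    rw [hρ]; exact Real.sSup_le hSbound hM0
  refine ⟨?_, ineq2, ?_⟩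
  · -- KKT inequality
    set p := A *ᵥ zt.1 - b with hp
    set d := posPt (Aᵀ *ᵥ zt.2 - c) with hd
    set g0 := c ⬝ᵥ zt.1 - b ⬝ᵥ zt.2 with hg0
    set γ := max g0 0 with hγ
    set K2 := p ⬝ᵥ p + d ⬝ᵥ d + γ ^ 2 with hK2
    have hK20 : 0 ≤ K2 :=
      add_nonneg (add_nonneg (dot_self_nonneg p) (dot_self_nonneg d)) (sq_nonneg γ)
    set K := Real.sqrt K2 with hKvar
    have hKdef : KKTerr A b c zt = K := rfl
    have hKK : K ^ 2 = K2 := Real.sq_sqrt hK20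
    have hK0 : 0 ≤ K := Real.sqrt_nonneg _
    have hγ0 : 0 ≤ γ := le_max_right _ _
    have hγK : γ ≤ K := by
      rw [hKvar, ← Real.sqrt_sq hγ0]
      apply Real.sqrt_le_sqrt
      nlinarith [dot_self_nonneg p, dot_self_nonneg d]
    have hR0 : 0 ≤ R := le_trans (nrmP_nonneg zt) hR
    have hc1pos : 0 < Real.sqrt (1 + R ^ 2) := Real.sqrt_pos.2 (by positivity)
    have hc1sq : Real.sqrt (1 + R ^ 2) ^ 2 = 1 + R ^ 2 := Real.sq_sqrt (by positivity)
    have hRc1 : R ≤ Real.sqrt (1 + R ^ 2) := by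
      conv_lhs => rw [← Real.sqrt_sq hR0]
      apply Real.sqrt_le_sqrt; linarith
    rw [hKdef]
    by_cases hK : K = 0
    · rw [hK, mul_zero]; exact hρ0
    · have hKpos : 0 < K := lt_of_le_of_ne hK0 (Ne.symm hK)
      set t := r / (K * Real.sqrt (1 + R ^ 2)) with ht
      have htpos : 0 < t := div_pos hr0 (mul_pos hKpos hc1pos)
      have htγ : t * γ ≤ 1 := by
        rw [ht, div_mul_eq_mul_div, div_le_one (mul_pos hKpos hc1pos)]
        calc r * γ ≤ Real.sqrt (1 + R ^ 2) * K :=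
              mul_le_mul (le_trans hrR hRc1) hγK hγ0 (le_of_lt hc1pos)
        _ = K * Real.sqrt (1 + R ^ 2) := mul_comm _ _
      set w : (Fin n → ℝ) × (Fin m → ℝ) :=
        (zt.1 + t • d - (t * γ) • zt.1, zt.2 - t • p - (t * γ) • zt.2) with hw
      have hw1 : ∀ i, 0 ≤ w.1 i := by
        intro i
        have hdi : 0 ≤ d i := by rw [hd]; exact posPt_nonneg _ i
        have hzi := hzt1nn i
        simp only [hw, Pi.add_apply, Pi.sub_apply, Pi.smul_apply, smul_eq_mul]
        nlinarith [htγ, htpos.le, mul_nonneg htpos.le hdi]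
      have hball : nrmP (zt - w) ≤ r := by
        have hsplit : zt - w = (t * γ) • zt + t • (-d, p) := by
          rw [hw]
          apply Prod.ext
          · show zt.1 - (zt.1 + t • d - (t * γ) • zt.1) = (t * γ) • zt.1 + t • (-d)
            funext i
            simp only [Pi.add_apply, Pi.sub_apply, Pi.smul_apply, Pi.neg_apply, smul_eq_mul]
            ring
          · show zt.2 - (zt.2 - t • p - (t * γ) • zt.2) = (t * γ) • zt.2 + t • p
            funext i
            simp only [Pi.add_apply, Pi.sub_apply, Pi.smul_apply, smul_eq_mul]
            ring
        have hnd : nrmP ((-d, p) : (Fin n → ℝ) × (Fin m → ℝ))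
            = Real.sqrt (d ⬝ᵥ d + p ⬝ᵥ p) := by
          unfold nrmP; simp [neg_dotProduct, dotProduct_neg]
        set s' := Real.sqrt (d ⬝ᵥ d + p ⬝ᵥ p) with hs'
        have hs'0 : 0 ≤ s' := Real.sqrt_nonneg _
        have hs'2 : s' ^ 2 = d ⬝ᵥ d + p ⬝ᵥ p :=
          Real.sq_sqrt (add_nonneg (dot_self_nonneg d) (dot_self_nonneg p))
        have hKc : (K * Real.sqrt (1 + R ^ 2)) ^ 2 = (s' ^ 2 + γ ^ 2) * (1 + R ^ 2) := by
          rw [mul_pow, hKK, hc1sq, hK2, hs'2]; ring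
        have hmain : γ * R + s' ≤ K * Real.sqrt (1 + R ^ 2) := by
          nlinarith [sq_nonneg (s' * R - γ), hKc, mul_pos hKpos hc1pos,
            mul_nonneg hγ0 hR0, hs'0]
        have h3 : t * (K * Real.sqrt (1 + R ^ 2)) = r := by
          rw [ht]; field_simp
        calc nrmP (zt - w) = nrmP ((t * γ) • zt + t • (-d, p)) := by rw [hsplit]
        _ ≤ nrmP ((t * γ) • zt) + nrmP (t • (-d, p)) := nrmP_triangle _ _
        _ = (t * γ) * nrmP zt + t * s' := by
            rw [nrmP_smul, nrmP_smul, abs_of_nonneg (mul_nonneg htpos.le hγ0),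
              abs_of_nonneg htpos.le, hnd]
        _ ≤ (t * γ) * R + t * s' := by
            have := mul_le_mul_of_nonneg_left hR (mul_nonneg htpos.le hγ0)
            linarith
        _ = t * (γ * R + s') := by ring
        _ ≤ t * (K * Real.sqrt (1 + R ^ 2)) := mul_le_mul_of_nonneg_left hmain htpos.le
        _ = r := h3
      have hgapval : Lag A b c zt.1 w.2 - Lag A b c w.1 zt.2 = t * K2 := by
        have hid := gap_identity A b c zt.1 d zt.2 p t γ
        have e1 : p ⬝ᵥ (A *ᵥ zt.1 - b) = p ⬝ᵥ p := by rw [← hp]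
        have e2 : d ⬝ᵥ (Aᵀ *ᵥ zt.2 - c) = d ⬝ᵥ d := by rw [hd]; exact posPt_dot _
        have e3 : γ * (c ⬝ᵥ zt.1 - b ⬝ᵥ zt.2) = γ ^ 2 := by
          rw [hγ, hg0]; exact max_mul_self g0
        rw [e1, e2] at hid
        simp only [hw]
        rw [hid, hK2]
        linear_combination t * e3
      have hmem : t * K2 / r ∈ S := ⟨w, hw1, hball, by rw [hgapval]⟩
      have hle := le_csSup hbdd hmem
      rw [hρ]
      have hval : t * K2 / r = 1 / Real.sqrt (1 + R ^ 2) * K := by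
        rw [← hKK, ht]
        field_simp
      rw [← hval]
      exact hle
  · -- distance inequality
    have hPnn : ∀ u : (Fin n → ℝ) × (Fin m → ℝ), 0 ≤ Pquad A η u := fun u => by
      rw [Pquad_eq_Pbil]; exact hPpos u
    have htd : ∀ zs ∈ saddleSet A b c,
        Real.sqrt σ * Pnorm A η (z - zt) ≤ 2 * σ * nrmP (z - zs) := by
      intro zs hzs
      have haxb := saddle_Ax hzs
      have hmono : 0 ≤ Pbil A η (z - zt) (zt - zs) := by
        have hid := key_identity3 A b c hη' z.1 zt.1 zs.1 z.2 zs.2 haxb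
        rw [← hzt2] at hid
        have hpair1 : (z.1 - zt.1, z.2 - zt.2) = z - zt := rfl
        have hpair2 : (zt.1 - zs.1, zt.2 - zs.2) = zt - zs := rfl
        rw [hpair1, hpair2, ← hv] at hid
        rw [hid]
        have hproj := proj_lemma v zs.1 hzs.1
        rw [← hzt1] at hproj
        have h1 : 0 ≤ (v - zt.1) ⬝ᵥ (zt.1 - zs.1) := by
          rw [← neg_sub zs.1 zt.1, dotProduct_neg]
          linarith
        have h2 := saddle_comp hzs zt.1 hzt1nn
        have hηpos : (0:ℝ) < 1 / η := by positivity
        nlinarith [mul_nonneg hηpos.le h1]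
      have hsplit : Pbil A η (zt - zs) (zt - zs) =
          Pbil A η (z - zs) (zt - zs) - Pbil A η (z - zt) (zt - zs) := by
        have hzz : z - zs = (z - zt) + (zt - zs) := by abel
        rw [hzz, Pbil_hadd]; ring
      set a := Real.sqrt (Pquad A η (zt - zs)) with ha
      set b' := Real.sqrt (Pquad A η (z - zs)) with hb'
      have ha0 : 0 ≤ a := Real.sqrt_nonneg _
      have hb'0 : 0 ≤ b' := Real.sqrt_nonneg _
      have ha2 : a ^ 2 = Pbil A η (zt - zs) (zt - zs) := by
        rw [ha, Real.sq_sqrt (hPnn _), Pquad_eq_Pbil]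
      have hb2 : b' ^ 2 = Pbil A η (z - zs) (z - zs) := by
        rw [hb', Real.sq_sqrt (hPnn _), Pquad_eq_Pbil]
      have hcs := hPcs (z - zs) (zt - zs)
      rw [← Pquad_eq_Pbil, ← Pquad_eq_Pbil, ← ha, ← hb'] at hcs
      have hab : a ≤ b' := by nlinarith
      have htri : Real.sqrt (Pquad A η (z - zt)) ≤ b' + a := by
        have hzz2 : z - zt = (z - zs) + (zs - zt) := by abel
        have htr := bilin_triangle (Pbil A η) (Pbil_hadd A η) (Pbil_hsmul A η)
          (Pbil_hsymm A η) hPpos (z - zs) (zs - zt)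
        have hneg : Pbil A η (zs - zt) (zs - zt) = Pbil A η (zt - zs) (zt - zs) := by
          have he : zs - zt = -(zt - zs) := by abel
          rw [he, Pbil_neg]
        rw [hneg, ← hzz2, ← Pquad_eq_Pbil, ← Pquad_eq_Pbil, ← Pquad_eq_Pbil,
          ← ha, ← hb'] at htr
        exact htr
      have hb'le : b' ≤ Real.sqrt σ * nrmP (z - zs) := by
        rw [hb']; exact Pnorm_le_sigma A hη0 hs _
      have hPn : Pnorm A η (z - zt) = Real.sqrt (Pquad A η (z - zt)) := rfl
      have hfin : Pnorm A η (z - zt) ≤ 2 * (Real.sqrt σ * nrmP (z - zs)) := by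
        rw [hPn]; linarith
      calc Real.sqrt σ * Pnorm A η (z - zt)
          ≤ Real.sqrt σ * (2 * (Real.sqrt σ * nrmP (z - zs))) :=
            mul_le_mul_of_nonneg_left hfin (Real.sqrt_nonneg _)
      _ = 2 * (Real.sqrt σ * Real.sqrt σ) * nrmP (z - zs) := by ring
      _ = 2 * σ * nrmP (z - zs) := by rw [Real.mul_self_sqrt hσ0]
    rcases eq_or_lt_of_le hσ0 with hσz | hσz
    · rw [hM, ← hσz, Real.sqrt_zero, zero_mul]
      simp
    · obtain ⟨zs0, hzs0⟩ := hZ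
      have hne : ((fun w => nrmP (z - w)) '' saddleSet A b c).Nonempty :=
        ⟨_, ⟨zs0, hzs0, rfl⟩⟩
      have h2σ : (0:ℝ) < 2 * σ := by linarith
      have hd2 : dist2 z (saddleSet A b c)
          = sInf ((fun w => nrmP (z - w)) '' saddleSet A b c) := rfl
      have hinf : Real.sqrt σ * Pnorm A η (z - zt) / (2 * σ)
          ≤ sInf ((fun w => nrmP (z - w)) '' saddleSet A b c) := by
        apply le_csInf hne
        rintro e ⟨zs, hzs, rfl⟩
        rw [div_le_iff₀ h2σ]
        calc Real.sqrt σ * Pnorm A η (z - zt) ≤ 2 * σ * nrmP (z - zs) := htd zs hzs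
        _ = nrmP (z - zs) * (2 * σ) := by ring
      rw [div_le_iff₀ h2σ] at hinf
      rw [hd2]
      linarith
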